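/- Fix an integer J > 2 and a real number r with 2/(3J) ≤ r ≤ 1/J. Let V = {(0,0), (0,J), (J,0), (J,2J), (2J,J), (2J,2J)} ⊂ ℝ² and let A_u = conv({(0,0), (1,1), (0,1)}). Then A_u ⊂ r·conv(V) + {(0,0), (−1,0)}. -/

import Mathlib

/-!
Put `c = r * J ∈ [2/3, 1]`. Then `r • conv V` is the hexagon `conv (hexagon c)`, which contains
every point `(u, v)` with `0 ≤ u, v ≤ 2c` and `|u - v| ≤ c`. A point `(x, y)` of the triangle has
`0 ≤ x ≤ y ≤ 1`; if `y - x ≤ c` it already lies in the hexagon, and otherwise `(x + 1, y)` does,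
because `c ≥ 2/3` leaves room for the shift.
-/

open Set Pointwise

theorem add_smul_mem_convexHull_of_zero_mem {𝕜 E : Type*} [Field 𝕜] [LinearOrder 𝕜]
    [IsStrictOrderedRing 𝕜] [AddCommGroup E] [Module 𝕜 E] {s : Set E} {x y : E} {a b : 𝕜}
    (h0 : 0 ∈ s) (hx : x ∈ s) (hy : y ∈ s) (ha : 0 ≤ a) (hb : 0 ≤ b) (hab : a + b ≤ 1) :
    a • x + b • y ∈ convexHull 𝕜 s := by
  have hmem := (convex_convexHull 𝕜 s).sum_mem (t := Finset.univ) (w := ![a, b, 1 - a - b])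
    (z := ![x, y, 0]) ?_ ?_ ?_
  · simpa [Fin.sum_univ_three] using hmem
  · intro i _
    fin_cases i <;> simp [ha, hb]
    linarith
  · simp [Fin.sum_univ_three]
  · intro i _
    fin_cases i <;> simp [subset_convexHull 𝕜 s hx, subset_convexHull 𝕜 s hy,
      subset_convexHull 𝕜 s h0]

def hexagon (c : ℝ) : Set (ℝ × ℝ) :=
  {(0, 0), (0, c), (c, 0), (c, 2 * c), (2 * c, c), (2 * c, 2 * c)}

theorem image_swap_hexagon (c : ℝ) : Prod.swap '' hexagon c = hexagon c := by
  ext ⟨u, v⟩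
  simp only [hexagon, image_insert_eq, image_singleton, Prod.swap_prod_mk, mem_insert_iff,
    mem_singleton_iff]
  tauto

theorem mem_convexHull_hexagon_of_le {c u v : ℝ} (hc : 0 < c) (hu : 0 ≤ u) (huv : u ≤ v)
    (hvu : v ≤ u + c) (hv : v ≤ 2 * c) : (u, v) ∈ convexHull ℝ (hexagon c) := by
  have h0 : (0 : ℝ × ℝ) ∈ hexagon c := mem_insert _ _
  rcases le_total v (2 * u) with h | h
  · convert add_smul_mem_convexHull_of_zero_mem (x := (c, 2 * c)) (y := (2 * c, 2 * c))
      (a := (v - u) / c) (b := (2 * u - v) / (2 * c)) h0 (by simp [hexagon]) (by simp [hexagon])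
      (by apply div_nonneg <;> linarith) (by apply div_nonneg <;> linarith) ?_ using 1
    · ext <;> simp only [Prod.smul_mk, Prod.mk_add_mk, smul_eq_mul] <;> field_simp <;> ring
    · have hsum : (v - u) / c + (2 * u - v) / (2 * c) = v / (2 * c) := by field_simp; ring
      rw [hsum, div_le_one (by positivity)]
      exact hv
  · convert add_smul_mem_convexHull_of_zero_mem (x := (0, c)) (y := (c, 2 * c))
      (a := (v - 2 * u) / c) (b := u / c) h0 (by simp [hexagon]) (by simp [hexagon])
      (by apply div_nonneg <;> linarith) (by apply div_nonneg <;> linarith) ?_ using 1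
    · ext <;> simp only [Prod.smul_mk, Prod.mk_add_mk, smul_eq_mul] <;> field_simp <;> ring
    · rw [← add_div, div_le_one hc]
      linarith

theorem mem_convexHull_hexagon {c u v : ℝ} (hc : 0 < c) (hu : 0 ≤ u) (hv : 0 ≤ v)
    (hu' : u ≤ 2 * c) (hv' : v ≤ 2 * c) (huv : u - v ≤ c) (hvu : v - u ≤ c) :
    (u, v) ∈ convexHull ℝ (hexagon c) := by
  rcases le_total u v with h | h
  · exact mem_convexHull_hexagon_of_le hc hu h (by linarith) hv'
  · have hswap := (LinearEquiv.prodComm ℝ ℝ ℝ).toLinearMap.image_convexHull (hexagon c)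
    change Prod.swap '' _ = convexHull ℝ (Prod.swap '' _) at hswap
    rw [image_swap_hexagon] at hswap
    exact hswap ▸ ⟨(v, u), mem_convexHull_hexagon_of_le hc hv h (by linarith) hu', rfl⟩

theorem convexHull_triangle_subset :
    convexHull ℝ {((0 : ℝ), (0 : ℝ)), ((1 : ℝ), (1 : ℝ)), ((0 : ℝ), (1 : ℝ))} ⊆
      {p : ℝ × ℝ | 0 ≤ p.1 ∧ p.1 ≤ p.2 ∧ p.2 ≤ 1} := by
  refine convexHull_min ?_ ?_
  · rintro p (rfl | rfl | rfl) <;> norm_num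
  · rintro ⟨px, py⟩ ⟨hp1, hp2, hp3⟩ ⟨qx, qy⟩ ⟨hq1, hq2, hq3⟩ a b ha hb hab
    simp only [mem_ofPred_eq, Prod.smul_mk, Prod.mk_add_mk, smul_eq_mul] at *
    exact ⟨by positivity, by nlinarith, by nlinarith⟩

theorem stmt16 (J : ℕ) (hJ : 2 < J) (r : ℝ)
    (hr1 : 2 / (3 * (J : ℝ)) ≤ r) (hr2 : r ≤ 1 / (J : ℝ))
    (V : Set (ℝ × ℝ))
    (hV : V = {((0 : ℝ), (0 : ℝ)), (0, (J : ℝ)), ((J : ℝ), 0), ((J : ℝ), 2 * (J : ℝ)),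
      (2 * (J : ℝ), (J : ℝ)), (2 * (J : ℝ), 2 * (J : ℝ))}) :
    convexHull ℝ {((0 : ℝ), (0 : ℝ)), ((1 : ℝ), (1 : ℝ)), ((0 : ℝ), (1 : ℝ))} ⊆
      r • convexHull ℝ V + ({((0 : ℝ), (0 : ℝ)), ((-1 : ℝ), (0 : ℝ))} : Set (ℝ × ℝ)) := by
  have hJ0 : (0 : ℝ) < J := by exact_mod_cast (by omega : 0 < J)
  have hc₁ : 2 / 3 ≤ r * J := by
    rw [div_le_iff₀ (by positivity)] at hr1
    linarith
  have hc₂ : r * J ≤ 1 := by rwa [le_div_iff₀ hJ0] at hr2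
  have hrV : r • convexHull ℝ V = convexHull ℝ (hexagon (r * J)) := by
    rw [← convexHull_smul, hV]
    simp [hexagon, smul_set_insert, mul_left_comm]
  rintro ⟨x, y⟩ hp
  obtain ⟨hx, hxy, hy⟩ := convexHull_triangle_subset hp
  rw [hrV]
  rcases le_or_gt (y - x) (r * J) with h | h
  · exact ⟨(x, y), mem_convexHull_hexagon (by linarith) hx (by linarith) (by linarith)
      (by linarith) (by linarith) h, (0, 0), by simp, by simp⟩
  · exact ⟨(x + 1, y), mem_convexHull_hexagon (by linarith) (by linarith) (by linarith)
      (by linarith) (by linarith) (by linarith) (by linarith), (-1, 0), by simp, by simp⟩
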